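/- Fix g ≥ 3 and s, n ≥ 0 with s+n > 0. Then the kernel of the ℤ-linear map ∂: C → M is the free abelian group freely generated by: (K1) a_{j,i} for 1 ≤ j ≤ g−1 and i ∉ {j, j+1}; (K2) a_{j,j} + a_{j,j+1} for 1 ≤ j ≤ g−1; (K3) u_{1,i} for 3 ≤ i ≤ g+s+n−1; (K4) u_{1,1} + u_{1,2}; (K5) e_{j,i} for 1 ≤ j ≤ s+n−1 and 3 ≤ i ≤ g+s+n−1; (K6) e_{j,1} + e_{j,2} for 1 ≤ j ≤ s+n−1; together with (K7) d_{j,i} for 1 ≤ j ≤ s−1 and all i (present exactly when g ∈ {3,4}); and (K8) b_{1,i} for 5 ≤ i ≤ g+s+n−1, (K9) b_{1,2} + b_{1,1} and b_{1,4} + b_{1,1}, (K10) b_{1,3} − b_{1,1}, (K11) b_{1,1} − a_{1,1} − a_{3,3} (present exactly when g ≥ 4). -/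

import Mathlib

namespace Stmt9

/-- Symbols `x` for the generators of `PM⁺(N_{g,s}^n)`: the twists `a_j`, the
crosscap transposition `u = u₁`, the twists `e_j`, the boundary twists `d_j`
(present for `g ∈ {3,4}`) and the twist `b = b₁` (present for `g ≥ 4`). -/
inductive SymKind : Type
  | a (j : ℕ)
  | u
  | e (j : ℕ)
  | d (j : ℕ)
  | b
  deriving DecidableEq

/-- Validity of a symbol `x_{·,i}` (a pair of a generator symbol and an index
`1 ≤ i ≤ g+s+n-1`): `a_j` for `1 ≤ j ≤ g-1`; `u = u₁`; `e_j` for `1 ≤ j ≤ s+n-1`;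
`d_j` for `1 ≤ j ≤ s-1`, present exactly when `g ∈ {3,4}`; `b = b₁`, present
exactly when `g ≥ 4`. -/
def validSym (g s n : ℕ) : SymKind × ℕ → Prop
  | (.a j, i) => 1 ≤ j ∧ j ≤ g - 1 ∧ 1 ≤ i ∧ i ≤ g + s + n - 1
  | (.u, i) => 1 ≤ i ∧ i ≤ g + s + n - 1
  | (.e j, i) => 1 ≤ j ∧ j ≤ s + n - 1 ∧ 1 ≤ i ∧ i ≤ g + s + n - 1
  | (.d j, i) => (g = 3 ∨ g = 4) ∧ 1 ≤ j ∧ j ≤ s - 1 ∧ 1 ≤ i ∧ i ≤ g + s + n - 1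
  | (.b, i) => 4 ≤ g ∧ 1 ≤ i ∧ i ≤ g + s + n - 1

/-- The free ℤ-module `C` on the valid symbols `x_{·,i}`. -/
abbrev C (g s n : ℕ) := {p : SymKind × ℕ // validSym g s n p} →₀ ℤ

/-- The ambient module containing `M`, the free ℤ-module on `γ₁,…,γ_g,δ₁,…,δ_{s+n-1}`. -/
abbrev M := ℕ →₀ ℤ

/-- The basis vector `γ_i` of `M`. -/
noncomputable def γ (i : ℕ) : M := Finsupp.single i 1

/-- The basis vector `δ_j` of `M`. -/
noncomputable def δ (g : ℕ) (j : ℕ) : M := Finsupp.single (g + j) 1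

/-- The value of the boundary map `∂` on the basis symbol `x_{·,i}`. -/
noncomputable def dval (g : ℕ) : SymKind × ℕ → M
  | (.a j, i) =>
      if i = j then γ j + γ (j + 1)
      else if i = j + 1 then -(γ j + γ (j + 1))
      else 0
  | (.u, i) =>
      if i = 1 then -γ 1 + γ 2
      else if i = 2 then γ 1 - γ 2
      else 0
  | (.e j, i) =>
      if i = 1 then γ 1 + γ 2 + ∑ t ∈ Finset.Icc 1 j, δ g t
      else if i = 2 then -(γ 1 + γ 2 + ∑ t ∈ Finset.Icc 1 j, δ g t)
      else 0
  | (.d _, _) => 0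
  | (.b, i) =>
      if i = 1 ∨ i = 3 then γ 1 + γ 2 + γ 3 + γ 4
      else if i = 2 ∨ i = 4 then -(γ 1 + γ 2 + γ 3 + γ 4)
      else 0

/-- The ℤ-linear boundary map `∂ : C → M`. -/
noncomputable def bd (g s n : ℕ) : C g s n →ₗ[ℤ] M :=
  Finsupp.linearCombination ℤ fun p => dval g p.1

/-- The basis vector of `C` corresponding to the symbol `p` (0 if `p` is invalid). -/
noncomputable def sym (g s n : ℕ) (p : SymKind × ℕ) : C g s n :=
  @dite _ (validSym g s n p) (Classical.dec _) (fun h => Finsupp.single ⟨p, h⟩ 1)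
    (fun _ => 0)

/-- Index type for the generators (K1)–(K11) of the kernel of `∂`. -/
inductive KKind : Type
  | k1 (j i : ℕ) | k2 (j : ℕ) | k3 (i : ℕ) | k4
  | k5 (j i : ℕ) | k6 (j : ℕ) | k7 (j i : ℕ)
  | k8 (i : ℕ) | k9b | k9d | k10 | k11

/-- Validity of the indices for (K1)–(K11); (K7) is present exactly when
`g ∈ {3,4}` and (K8)–(K11) exactly when `g ≥ 4`. -/
def validK (g s n : ℕ) : KKind → Prop
  | .k1 j i => 1 ≤ j ∧ j ≤ g - 1 ∧ 1 ≤ i ∧ i ≤ g + s + n - 1 ∧ i ≠ j ∧ i ≠ j + 1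
  | .k2 j => 1 ≤ j ∧ j ≤ g - 1
  | .k3 i => 3 ≤ i ∧ i ≤ g + s + n - 1
  | .k4 => True
  | .k5 j i => 1 ≤ j ∧ j ≤ s + n - 1 ∧ 3 ≤ i ∧ i ≤ g + s + n - 1
  | .k6 j => 1 ≤ j ∧ j ≤ s + n - 1
  | .k7 j i => (g = 3 ∨ g = 4) ∧ 1 ≤ j ∧ j ≤ s - 1 ∧ 1 ≤ i ∧ i ≤ g + s + n - 1
  | .k8 i => 4 ≤ g ∧ 5 ≤ i ∧ i ≤ g + s + n - 1
  | .k9b => 4 ≤ g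
  | .k9d => 4 ≤ g
  | .k10 => 4 ≤ g
  | .k11 => 4 ≤ g

/-- The elements (K1)–(K11) of `C`. -/
noncomputable def kvec (g s n : ℕ) : KKind → C g s n
  | .k1 j i => sym g s n (.a j, i)
  | .k2 j => sym g s n (.a j, j) + sym g s n (.a j, j + 1)
  | .k3 i => sym g s n (.u, i)
  | .k4 => sym g s n (.u, 1) + sym g s n (.u, 2)
  | .k5 j i => sym g s n (.e j, i)
  | .k6 j => sym g s n (.e j, 1) + sym g s n (.e j, 2)
  | .k7 j i => sym g s n (.d j, i)
  | .k8 i => sym g s n (.b, i)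
  | .k9b => sym g s n (.b, 2) + sym g s n (.b, 1)
  | .k9d => sym g s n (.b, 4) + sym g s n (.b, 1)
  | .k10 => sym g s n (.b, 3) - sym g s n (.b, 1)
  | .k11 => sym g s n (.b, 1) - sym g s n (.a 1, 1) - sym g s n (.a 3, 3)

section Aux
open Finsupp

variable {g s n : ℕ}

lemma sym_eq {p : SymKind × ℕ} (hp : validSym g s n p) :
    sym g s n p = Finsupp.single ⟨p, hp⟩ 1 := dif_pos hp

lemma bd_sym {p : SymKind × ℕ} (hp : validSym g s n p) :
    bd g s n (sym g s n p) = dval g p := by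
  rw [sym_eq hp]; simp [bd]

def isSb : SymKind × ℕ → Bool
  | (.a j, i) => i == j
  | (.u, i) => i == 1
  | (.e _, i) => i == 1
  | _ => false

def lead : KKind → SymKind × ℕ
  | .k1 j i => (.a j, i)
  | .k2 j => (.a j, j+1)
  | .k3 i => (.u, i)
  | .k4 => (.u, 2)
  | .k5 j i => (.e j, i)
  | .k6 j => (.e j, 2)
  | .k7 j i => (.d j, i)
  | .k8 i => (.b, i)
  | .k9b => (.b, 2)
  | .k9d => (.b, 4)
  | .k10 => (.b, 3)
  | .k11 => (.b, 1)

abbrev B := (SymKind × ℕ) →₀ ℤ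

noncomputable def piVal (p : SymKind × ℕ) : B :=
  if isSb p then 0
  else if p = (.b, 2) ∨ p = (.b, 4) then Finsupp.single p 1 - Finsupp.single (.b, 1) 1
  else if p = (.b, 3) then Finsupp.single p 1 + Finsupp.single (.b, 1) 1
  else Finsupp.single p 1

noncomputable def piMap (g s n : ℕ) : C g s n →ₗ[ℤ] B :=
  Finsupp.linearCombination ℤ fun q : {p // validSym g s n p} => piVal q.1

lemma piMap_sym {p : SymKind × ℕ} (hp : validSym g s n p) :
    piMap g s n (sym g s n p) = piVal p := by
  rw [sym_eq hp]; simp [piMap]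

end Aux
section Aux2
open Finsupp
variable {g s n : ℕ}

lemma piMap_kvec (hg : 3 ≤ g) (hsn : 0 < s + n) {k : KKind} (hk : validK g s n k) :
    piMap g s n (kvec g s n k) = Finsupp.single (lead k) 1 := by
  cases k with
  | k1 j i =>
      obtain ⟨h1,h2,h3,h4,h5,h6⟩ := hk
      rw [kvec, piMap_sym (by simp [validSym]; omega)]
      simp [piVal, isSb, lead, h5]
  | k2 j =>
      obtain ⟨h1,h2⟩ := hk
      rw [kvec, map_add, piMap_sym (by simp [validSym]; omega),
        piMap_sym (by simp [validSym]; omega)]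
      simp [piVal, isSb, lead]
  | k3 i =>
      obtain ⟨h1,h2⟩ := hk
      rw [kvec, piMap_sym (by simp [validSym]; omega)]
      simp [piVal, isSb, lead]; omega
  | k4 =>
      rw [kvec, map_add, piMap_sym (by simp [validSym]; omega),
        piMap_sym (by simp [validSym]; omega)]
      simp [piVal, isSb, lead]
  | k5 j i =>
      obtain ⟨h1,h2,h3,h4⟩ := hk
      rw [kvec, piMap_sym (by simp [validSym]; omega)]
      simp [piVal, isSb, lead]; omega
  | k6 j =>
      obtain ⟨h1,h2⟩ := hk
      rw [kvec, map_add, piMap_sym (by simp [validSym]; omega),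
        piMap_sym (by simp [validSym]; omega)]
      simp [piVal, isSb, lead]
  | k7 j i =>
      obtain ⟨h1,h2,h3,h4,h5⟩ := hk
      rw [kvec, piMap_sym (by simp [validSym]; omega)]
      simp [piVal, isSb, lead]
  | k8 i =>
      obtain ⟨h1,h2,h3⟩ := hk
      rw [kvec, piMap_sym (by simp [validSym]; omega)]
      simp [piVal, isSb, lead]
      rw [if_neg (by omega), if_neg (by omega)]
  | k9b =>
      have h4 : 4 ≤ g := hk
      rw [kvec, map_add, piMap_sym (by simp [validSym]; omega),
        piMap_sym (by simp [validSym]; omega)]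
      simp [piVal, isSb, lead]
  | k9d =>
      have h4 : 4 ≤ g := hk
      rw [kvec, map_add, piMap_sym (by simp [validSym]; omega),
        piMap_sym (by simp [validSym]; omega)]
      simp [piVal, isSb, lead]
  | k10 =>
      have h4 : 4 ≤ g := hk
      rw [kvec, map_sub, piMap_sym (by simp [validSym]; omega),
        piMap_sym (by simp [validSym]; omega)]
      simp [piVal, isSb, lead]
  | k11 =>
      have h4 : 4 ≤ g := hk
      rw [kvec, map_sub, map_sub, piMap_sym (by simp [validSym]; omega),
        piMap_sym (by simp [validSym]; omega), piMap_sym (by simp [validSym]; omega)]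
      simp [piVal, isSb, lead]
end Aux2
section Aux3
open Finsupp
variable {g s n : ℕ}

lemma lead_inj :
    Function.Injective (fun k : {k : KKind // validK g s n k} => lead k.1) := by
  rintro ⟨k1, h1⟩ ⟨k2, h2⟩ h
  simp only at h
  apply Subtype.ext
  cases k1 <;> cases k2 <;> simp only [validK] at h1 h2 <;> simp_all [lead] <;> omega

lemma single_indep :
    LinearIndependent ℤ (fun p : SymKind × ℕ => (Finsupp.single p 1 : B)) := by
  simpa using (Finsupp.basisSingleOne (R := ℤ) (ι := SymKind × ℕ)).linearIndependent

lemma kvec_indep (hg : 3 ≤ g) (hsn : 0 < s + n) :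
    LinearIndependent ℤ (fun k : {k : KKind // validK g s n k} => kvec g s n k.1) := by
  apply LinearIndependent.of_comp (piMap g s n)
  have heq : (piMap g s n ∘ fun k : {k : KKind // validK g s n k} => kvec g s n k.1)
      = (fun p : SymKind × ℕ => (Finsupp.single p 1 : B)) ∘
        (fun k : {k : KKind // validK g s n k} => lead k.1) := by
    funext k; exact piMap_kvec hg hsn k.2
  rw [heq]
  exact single_indep.comp _ lead_inj
end Aux3
section Aux4
open Finsupp
variable {g s n : ℕ}

lemma bd_kvec (hg : 3 ≤ g) (hsn : 0 < s + n) {k : KKind} (hk : validK g s n k) :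
    bd g s n (kvec g s n k) = 0 := by
  cases k with
  | k1 j i =>
      obtain ⟨h1,h2,h3,h4,h5,h6⟩ := hk
      rw [kvec, bd_sym (by simp [validSym]; omega)]
      simp only [dval]
      rw [if_neg h5, if_neg h6]
  | k2 j =>
      obtain ⟨h1,h2⟩ := hk
      rw [kvec, map_add, bd_sym (by simp [validSym]; omega),
        bd_sym (by simp [validSym]; omega)]
      simp only [dval]
      norm_num [Nat.succ_ne_self]
  | k3 i =>
      obtain ⟨h1,h2⟩ := hk
      rw [kvec, bd_sym (by simp [validSym]; omega)]
      simp only [dval]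
      rw [if_neg (by omega), if_neg (by omega)]
  | k4 =>
      rw [kvec, map_add, bd_sym (by simp [validSym]; omega),
        bd_sym (by simp [validSym]; omega)]
      simp only [dval]
      norm_num
  | k5 j i =>
      obtain ⟨h1,h2,h3,h4⟩ := hk
      rw [kvec, bd_sym (by simp [validSym]; omega)]
      simp only [dval]
      rw [if_neg (by omega), if_neg (by omega)]
  | k6 j =>
      obtain ⟨h1,h2⟩ := hk
      rw [kvec, map_add, bd_sym (by simp [validSym]; omega),
        bd_sym (by simp [validSym]; omega)]
      simp only [dval]
      norm_num
  | k7 j i =>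
      obtain ⟨h1,h2,h3,h4,h5⟩ := hk
      rw [kvec, bd_sym (by simp [validSym]; omega)]
      simp only [dval]
  | k8 i =>
      obtain ⟨h1,h2,h3⟩ := hk
      rw [kvec, bd_sym (by simp [validSym]; omega)]
      simp only [dval]
      rw [if_neg (by omega), if_neg (by omega)]
  | k9b =>
      have h4 : 4 ≤ g := hk
      rw [kvec, map_add, bd_sym (by simp [validSym]; omega),
        bd_sym (by simp [validSym]; omega)]
      simp only [dval]
      norm_num
      abel
  | k9d =>
      have h4 : 4 ≤ g := hk
      rw [kvec, map_add, bd_sym (by simp [validSym]; omega),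
        bd_sym (by simp [validSym]; omega)]
      simp only [dval]
      norm_num
      abel
  | k10 =>
      have h4 : 4 ≤ g := hk
      rw [kvec, map_sub, bd_sym (by simp [validSym]; omega),
        bd_sym (by simp [validSym]; omega)]
      simp only [dval]
      norm_num
  | k11 =>
      have h4 : 4 ≤ g := hk
      rw [kvec, map_sub, map_sub, bd_sym (by simp [validSym]; omega),
        bd_sym (by simp [validSym]; omega), bd_sym (by simp [validSym]; omega)]
      simp only [dval]
      norm_num
      abel
end Aux4
section Aux5
open Finsupp
variable (g s n : ℕ)

noncomputable def Vsub : Submodule ℤ (C g s n) :=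
  Submodule.span ℤ (Set.range fun k : {k : KKind // validK g s n k} => kvec g s n k.1)

noncomputable def SpS : Submodule ℤ (C g s n) :=
  Submodule.span ℤ
    (Set.range fun q : {p : SymKind × ℕ // validSym g s n p ∧ isSb p} => sym g s n q.1)

variable {g s n}

lemma mem_V {k : KKind} (hk : validK g s n k) : kvec g s n k ∈ Vsub g s n :=
  Submodule.subset_span ⟨⟨k, hk⟩, rfl⟩

lemma mem_S {p : SymKind × ℕ} (hp : validSym g s n p) (hs : isSb p) :
    sym g s n p ∈ SpS g s n :=
  Submodule.subset_span ⟨⟨p, hp, hs⟩, rfl⟩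

lemma sym_mem_sup (hg : 3 ≤ g) (hsn : 0 < s + n) (p : SymKind × ℕ)
    (hp : validSym g s n p) : sym g s n p ∈ Vsub g s n ⊔ SpS g s n := by
  obtain ⟨x, i⟩ := p
  cases x with
  | a j =>
      obtain ⟨h1, h2, h3, h4⟩ := hp
      by_cases hij : i = j
      · subst hij
        exact Submodule.mem_sup_right (mem_S (by simp [validSym]; omega) (by simp [isSb]))
      · by_cases hij1 : i = j + 1
        · subst hij1
          have he : sym g s n (.a j, j + 1) =
              kvec g s n (.k2 j) - sym g s n (.a j, j) := by rw [kvec]; abel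
          rw [he]
          exact Submodule.sub_mem _
            (Submodule.mem_sup_left (mem_V (by exact ⟨h1, h2⟩)))
            (Submodule.mem_sup_right (mem_S (by simp [validSym]; omega) (by simp [isSb])))
        · exact Submodule.mem_sup_left (mem_V (k := .k1 j i) ⟨h1, h2, h3, h4, hij, hij1⟩)
  | u =>
      obtain ⟨h1, h2⟩ := hp
      by_cases hi1 : i = 1
      · subst hi1
        exact Submodule.mem_sup_right (mem_S (by simp [validSym]; omega) (by simp [isSb]))
      · by_cases hi2 : i = 2
        · subst hi2
          have he : sym g s n (.u, 2) = kvec g s n .k4 - sym g s n (.u, 1) := by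
            rw [kvec]; abel
          rw [he]
          exact Submodule.sub_mem _
            (Submodule.mem_sup_left (mem_V trivial))
            (Submodule.mem_sup_right (mem_S (by simp [validSym]; omega) (by simp [isSb])))
        · exact Submodule.mem_sup_left (mem_V (k := .k3 i) ⟨by omega, h2⟩)
  | e j =>
      obtain ⟨h1, h2, h3, h4⟩ := hp
      by_cases hi1 : i = 1
      · subst hi1
        exact Submodule.mem_sup_right (mem_S (by simp [validSym]; omega) (by simp [isSb]))
      · by_cases hi2 : i = 2
        · subst hi2
          have he : sym g s n (.e j, 2) =
              kvec g s n (.k6 j) - sym g s n (.e j, 1) := by rw [kvec]; abel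
          rw [he]
          exact Submodule.sub_mem _
            (Submodule.mem_sup_left (mem_V (by exact ⟨h1, h2⟩)))
            (Submodule.mem_sup_right (mem_S (by simp [validSym]; omega) (by simp [isSb])))
        · exact Submodule.mem_sup_left (mem_V (k := .k5 j i) ⟨h1, h2, by omega, h4⟩)
  | d j =>
      obtain ⟨h1, h2, h3, h4, h5⟩ := hp
      exact Submodule.mem_sup_left (mem_V (k := .k7 j i) ⟨h1, h2, h3, h4, h5⟩)
  | b =>
      obtain ⟨h1, h2, h3⟩ := hp
      have hb1 : sym g s n (.b, 1) ∈ Vsub g s n ⊔ SpS g s n := by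
        have he : sym g s n (.b, 1) =
            kvec g s n .k11 + sym g s n (.a 1, 1) + sym g s n (.a 3, 3) := by
          rw [kvec]; abel
        rw [he]
        refine Submodule.add_mem _ (Submodule.add_mem _
          (Submodule.mem_sup_left (mem_V h1)) ?_) ?_
        · exact Submodule.mem_sup_right (mem_S (by simp [validSym]; omega) (by simp [isSb]))
        · exact Submodule.mem_sup_right (mem_S (by simp [validSym]; omega) (by simp [isSb]))
      by_cases hi1 : i = 1
      · subst hi1; exact hb1
      · by_cases hi2 : i = 2
        · subst hi2
          have he : sym g s n (.b, 2) = kvec g s n .k9b - sym g s n (.b, 1) := by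
            rw [kvec]; abel
          rw [he]
          exact Submodule.sub_mem _ (Submodule.mem_sup_left (mem_V h1)) hb1
        · by_cases hi3 : i = 3
          · subst hi3
            have he : sym g s n (.b, 3) = kvec g s n .k10 + sym g s n (.b, 1) := by
              rw [kvec]; abel
            rw [he]
            exact Submodule.add_mem _ (Submodule.mem_sup_left (mem_V h1)) hb1
          · by_cases hi4 : i = 4
            · subst hi4
              have he : sym g s n (.b, 4) = kvec g s n .k9d - sym g s n (.b, 1) := by
                rw [kvec]; abel
              rw [he]
              exact Submodule.sub_mem _ (Submodule.mem_sup_left (mem_V h1)) hb1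
            · exact Submodule.mem_sup_left (mem_V (k := .k8 i) ⟨h1, by omega, h3⟩)

lemma sup_eq_top (hg : 3 ≤ g) (hsn : 0 < s + n) :
    Vsub g s n ⊔ SpS g s n = ⊤ := by
  rw [eq_top_iff]
  intro x _
  induction x using Finsupp.induction_linear with
  | zero => exact Submodule.zero_mem _
  | add a b ha hb => exact Submodule.add_mem _ (ha trivial) (hb trivial)
  | single a b =>
      have he : Finsupp.single a b = b • sym g s n a.1 := by
        rw [sym_eq a.2, Finsupp.smul_single]
        simp
      rw [he]
      exact Submodule.smul_mem _ _ (sym_mem_sup hg hsn a.1 a.2)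
end Aux5
section Aux6
open Finsupp
variable {g s n : ℕ}

noncomputable def phi (w : ℕ → ℚ) : M →ₗ[ℤ] ℚ := Finsupp.linearCombination ℤ w

@[simp] lemma phi_gamma (w : ℕ → ℚ) (i : ℕ) : phi w (γ i) = w i := by
  simp [phi, γ]

@[simp] lemma phi_delta (w : ℕ → ℚ) (t : ℕ) : phi w (δ g t) = w (g + t) := by
  simp [phi, δ]

noncomputable def wA (g j₀ : ℕ) : ℕ → ℚ := fun m =>
  if j₀ = 1 then
    (if m = g + 1 then -1 else if m = 1 then 2⁻¹
     else if m ≤ g ∧ 2 ≤ m then (if m % 2 = 0 then 2⁻¹ else -2⁻¹) else 0)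
  else
    (if m ≤ g ∧ j₀ + 1 ≤ m then (if (m - (j₀ + 1)) % 2 = 0 then 1 else -1) else 0)

noncomputable def wU (g : ℕ) : ℕ → ℚ := fun m =>
  if 1 ≤ m ∧ m ≤ g then (if m % 2 = 0 then 2⁻¹ else -2⁻¹) else 0

noncomputable def wE (g j₀ : ℕ) : ℕ → ℚ := fun m =>
  if m = g + j₀ then 1 else if m = g + (j₀ + 1) then -1 else 0

lemma sum_w_zero (w : ℕ → ℚ) (j : ℕ) (h : ∀ t, 1 ≤ t → t ≤ j → w (g + t) = 0) :
    ∑ t ∈ Finset.Icc 1 j, w (g + t) = 0 := by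
  apply Finset.sum_eq_zero
  intro t ht
  rw [Finset.mem_Icc] at ht
  exact h t ht.1 ht.2

lemma hAA (hg : 3 ≤ g) {j j₀ : ℕ} (h1 : 1 ≤ j) (h2 : j ≤ g - 1)
    (h1' : 1 ≤ j₀) (h2' : j₀ ≤ g - 1) :
    wA g j₀ j + wA g j₀ (j + 1) = if j = j₀ then 1 else 0 := by
  simp only [wA]
  split_ifs <;> first | contradiction | omega | norm_num

lemma hAU (hg : 3 ≤ g) {j₀ : ℕ} (h1' : 1 ≤ j₀) (h2' : j₀ ≤ g - 1) :
    -wA g j₀ 1 + wA g j₀ 2 = 0 := by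
  simp only [wA]
  split_ifs <;> first | contradiction | omega | norm_num

lemma hAE (hg : 3 ≤ g) {j j₀ : ℕ} (h1 : 1 ≤ j) (h1' : 1 ≤ j₀) (h2' : j₀ ≤ g - 1) :
    wA g j₀ 1 + wA g j₀ 2 + ∑ t ∈ Finset.Icc 1 j, wA g j₀ (g + t) = 0 := by
  have hs : ∀ t ∈ Finset.Icc 1 j, wA g j₀ (g + t)
      = if t = 1 then (if j₀ = 1 then (-1 : ℚ) else 0) else 0 := by
    intro t ht
    rw [Finset.mem_Icc] at ht
    simp only [wA]
    split_ifs <;> first | contradiction | omega | norm_num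
  rw [Finset.sum_congr rfl hs, Finset.sum_ite_eq' (Finset.Icc 1 j) 1]
  rw [if_pos (by rw [Finset.mem_Icc]; omega)]
  simp only [wA]
  split_ifs <;> first | contradiction | omega | norm_num

lemma hUA (hg : 3 ≤ g) {j : ℕ} (h1 : 1 ≤ j) (h2 : j ≤ g - 1) :
    wU g j + wU g (j + 1) = 0 := by
  simp only [wU]
  split_ifs <;> first | contradiction | omega | norm_num

lemma hUU (hg : 3 ≤ g) : -wU g 1 + wU g 2 = 1 := by
  simp only [wU]
  split_ifs <;> first | contradiction | omega | norm_num

lemma hUE (hg : 3 ≤ g) {j : ℕ} (h1 : 1 ≤ j) :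
    wU g 1 + wU g 2 + ∑ t ∈ Finset.Icc 1 j, wU g (g + t) = 0 := by
  rw [sum_w_zero _ _ (by intro t ht1 ht2; simp only [wU]; split_ifs <;> first | contradiction | omega | norm_num)]
  simp only [wU]
  split_ifs <;> first | contradiction | omega | norm_num

lemma hEA (hg : 3 ≤ g) {j j₀ : ℕ} (h1 : 1 ≤ j) (h2 : j ≤ g - 1) (h1' : 1 ≤ j₀) :
    wE g j₀ j + wE g j₀ (j + 1) = 0 := by
  simp only [wE]
  split_ifs <;> first | contradiction | omega | norm_num

lemma hEU (hg : 3 ≤ g) {j₀ : ℕ} (h1' : 1 ≤ j₀) :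
    -wE g j₀ 1 + wE g j₀ 2 = 0 := by
  simp only [wE]
  split_ifs <;> first | contradiction | omega | norm_num

lemma hEE (hg : 3 ≤ g) {j j₀ : ℕ} (h1 : 1 ≤ j) (h1' : 1 ≤ j₀) :
    wE g j₀ 1 + wE g j₀ 2 + ∑ t ∈ Finset.Icc 1 j, wE g j₀ (g + t)
      = if j = j₀ then 1 else 0 := by
  have hs : ∀ t ∈ Finset.Icc 1 j, wE g j₀ (g + t)
      = (if t = j₀ then (1 : ℚ) else 0) + (if t = j₀ + 1 then (-1 : ℚ) else 0) := by
    intro t ht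
    simp only [wE]
    split_ifs <;> first | contradiction | omega | norm_num
  rw [Finset.sum_congr rfl hs, Finset.sum_add_distrib,
    Finset.sum_ite_eq' (Finset.Icc 1 j) j₀, Finset.sum_ite_eq' (Finset.Icc 1 j) (j₀ + 1)]
  have hw1 : wE g j₀ 1 = 0 := by simp only [wE]; split_ifs <;> first | contradiction | omega | norm_num
  have hw2 : wE g j₀ 2 = 0 := by simp only [wE]; split_ifs <;> first | contradiction | omega | norm_num
  rw [hw1, hw2]
  simp only [Finset.mem_Icc]
  split_ifs <;> first | contradiction | omega | norm_num
end Aux6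
section Aux7
open Finsupp
variable {g s n : ℕ}

noncomputable def wsel (g : ℕ) : SymKind × ℕ → ℕ → ℚ
  | (.a j, _) => wA g j
  | (.u, _) => wU g
  | (.e j, _) => wE g j
  | _ => fun _ => 0

lemma phi_dval_indicator (hg : 3 ≤ g) {q q₀ : SymKind × ℕ}
    (hq : validSym g s n q) (hqs : isSb q) (hq₀ : validSym g s n q₀) (hq₀s : isSb q₀) :
    phi (wsel g q₀) (dval g q) = if q = q₀ then 1 else 0 := by
  obtain ⟨x, i⟩ := q; obtain ⟨x₀, i₀⟩ := q₀
  cases x with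
  | d j => exact absurd hqs (by simp [isSb])
  | b => exact absurd hqs (by simp [isSb])
  | a j =>
    simp only [isSb, beq_iff_eq] at hqs; subst hqs
    obtain ⟨h1, h2, -, -⟩ := hq
    cases x₀ with
    | d j => exact absurd hq₀s (by simp [isSb])
    | b => exact absurd hq₀s (by simp [isSb])
    | a j₀ =>
      simp only [isSb, beq_iff_eq] at hq₀s; subst hq₀s
      obtain ⟨h1', h2', -, -⟩ := hq₀
      simp only [dval, eq_self_iff_true, if_true, wsel, map_add, phi_gamma]
      rw [hAA (j := i) (j₀ := i₀) hg h1 h2 h1' h2']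
      simp [Prod.ext_iff]
    | u =>
      simp only [dval, eq_self_iff_true, if_true, wsel, map_add, phi_gamma]
      rw [show wU g i + wU g (i + 1) = 0 from hUA hg h1 h2]
      simp
    | e j₀ =>
      simp only [isSb, beq_iff_eq] at hq₀s; subst hq₀s
      obtain ⟨h1', -, -, -⟩ := hq₀
      simp only [dval, eq_self_iff_true, if_true, wsel, map_add, phi_gamma]
      rw [show wE g j₀ i + wE g j₀ (i + 1) = 0 from hEA hg h1 h2 h1']
      simp
  | u =>
    simp only [isSb, beq_iff_eq] at hqs; subst hqs
    cases x₀ with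
    | d j => exact absurd hq₀s (by simp [isSb])
    | b => exact absurd hq₀s (by simp [isSb])
    | a j₀ =>
      simp only [isSb, beq_iff_eq] at hq₀s; subst hq₀s
      obtain ⟨h1', h2', -, -⟩ := hq₀
      simp only [dval, eq_self_iff_true, if_true, wsel, map_add, map_neg, phi_gamma]
      rw [show -wA g i₀ 1 + wA g i₀ 2 = 0 from hAU hg h1' h2']
      simp
    | u =>
      simp only [isSb, beq_iff_eq] at hq₀s; subst hq₀s
      simp only [dval, eq_self_iff_true, if_true, wsel, map_add, map_neg, phi_gamma]
      rw [show -wU g 1 + wU g 2 = 1 from hUU hg]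
    | e j₀ =>
      simp only [isSb, beq_iff_eq] at hq₀s; subst hq₀s
      obtain ⟨h1', -, -, -⟩ := hq₀
      simp only [dval, eq_self_iff_true, if_true, wsel, map_add, map_neg, phi_gamma]
      rw [show -wE g j₀ 1 + wE g j₀ 2 = 0 from hEU hg h1']
      simp
  | e j =>
    simp only [isSb, beq_iff_eq] at hqs; subst hqs
    obtain ⟨h1, -, -, -⟩ := hq
    cases x₀ with
    | d j => exact absurd hq₀s (by simp [isSb])
    | b => exact absurd hq₀s (by simp [isSb])
    | a j₀ =>
      simp only [isSb, beq_iff_eq] at hq₀s; subst hq₀s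
      obtain ⟨h1', h2', -, -⟩ := hq₀
      simp only [dval, eq_self_iff_true, if_true, wsel, map_add, map_sum, phi_gamma, phi_delta]
      rw [show wA g i₀ 1 + wA g i₀ 2 + ∑ t ∈ Finset.Icc 1 j, wA g i₀ (g + t) = 0 from
        hAE hg h1 h1' h2']
      simp
    | u =>
      simp only [isSb, beq_iff_eq] at hq₀s; subst hq₀s
      simp only [dval, eq_self_iff_true, if_true, wsel, map_add, map_sum, phi_gamma, phi_delta]
      rw [show wU g 1 + wU g 2 + ∑ t ∈ Finset.Icc 1 j, wU g (g + t) = 0 from hUE hg h1]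
      simp
    | e j₀ =>
      simp only [isSb, beq_iff_eq] at hq₀s; subst hq₀s
      obtain ⟨h1', -, -, -⟩ := hq₀
      simp only [dval, eq_self_iff_true, if_true, wsel, map_add, map_sum, phi_gamma, phi_delta]
      rw [show wE g j₀ 1 + wE g j₀ 2 + ∑ t ∈ Finset.Icc 1 j, wE g j₀ (g + t)
          = if j = j₀ then 1 else 0 from hEE hg h1 h1']
      simp [Prod.ext_iff]

lemma spS_cancel (hg : 3 ≤ g) (hsn : 0 < s + n) {z : C g s n} (hz : z ∈ SpS g s n)
    (h0 : bd g s n z = 0) : z = 0 := by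
  rw [SpS, Finsupp.mem_span_range_iff_exists_finsupp] at hz
  obtain ⟨c, hc⟩ := hz
  have hbd : (c.sum fun q a => a • dval g q.1) = 0 := by
    rw [← h0, ← hc, map_finsuppSum]
    exact Finsupp.sum_congr fun q _ => by rw [LinearMap.map_smul, bd_sym q.2.1]
  have hcq : ∀ q₀ : {p : SymKind × ℕ // validSym g s n p ∧ isSb p}, c q₀ = 0 := by
    intro q₀
    have h1 := congrArg (phi (wsel g q₀.1)) hbd
    rw [map_finsuppSum, map_zero] at h1
    have h2 : (c.sum fun q a => phi (wsel g q₀.1) (a • dval g q.1)) =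
        c.sum fun q a => if q = q₀ then (a : ℚ) else 0 := by
      refine Finsupp.sum_congr fun q _ => ?_
      rw [LinearMap.map_smul, phi_dval_indicator hg q.2.1 q.2.2 q₀.2.1 q₀.2.2]
      by_cases h : q = q₀
      · rw [if_pos (by rw [h]), if_pos h]; simp
      · rw [if_neg (by intro he; exact h (Subtype.ext he)), if_neg h]; simp
    rw [h2] at h1
    have h3 : (c.sum fun q a => if q = q₀ then (a : ℚ) else 0) = (c q₀ : ℚ) := by
      rw [Finsupp.sum_ite_eq' c q₀ fun _ a => (a : ℚ)]
      by_cases hmem : q₀ ∈ c.support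
      · rw [if_pos hmem]
      · rw [if_neg hmem]
        rw [Finsupp.notMem_support_iff] at hmem
        rw [hmem]; simp
    rw [h3] at h1
    exact_mod_cast h1
  have hc0 : c = 0 := Finsupp.ext fun q => hcq q
  rw [← hc, hc0, Finsupp.sum_zero_index]
end Aux7
/-- Proposition 5.1: for `g ≥ 3` and `s+n > 0`, the kernel of `∂ : C → M` is the
free abelian group freely generated by the elements (K1)–(K6), together with (K7)
when `g ∈ {3,4}` and (K8)–(K11) when `g ≥ 4`. -/
theorem kernel_freely_generated (g s n : ℕ) (hg : 3 ≤ g) (hsn : 0 < s + n) :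
    LinearIndependent ℤ
      (fun k : {k : KKind // validK g s n k} => kvec g s n k.1) ∧
    Submodule.span ℤ
        (Set.range fun k : {k : KKind // validK g s n k} => kvec g s n k.1)
      = LinearMap.ker (bd g s n) := by
  have hVker : Vsub g s n ≤ LinearMap.ker (bd g s n) := by
    rw [Vsub, Submodule.span_le]
    rintro y ⟨k, rfl⟩
    exact LinearMap.mem_ker.mpr (bd_kvec hg hsn k.2)
  refine ⟨kvec_indep hg hsn, le_antisymm hVker ?_⟩
  intro x hx
  have hx' : x ∈ Vsub g s n ⊔ SpS g s n := by
    rw [sup_eq_top hg hsn]; trivial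
  obtain ⟨v, hv, z, hz, rfl⟩ := Submodule.mem_sup.mp hx'
  have hbv : bd g s n v = 0 := hVker hv
  have hbz : bd g s n z = 0 := by
    have h := LinearMap.mem_ker.mp hx
    rw [map_add, hbv, zero_add] at h
    exact h
  rw [spS_cancel hg hsn hz hbz, add_zero]
  exact hv

end Stmt9
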